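/- Let f : (0,∞) → (0,∞) be a measurable log-convex function and let a > 0. Assume that for every x > 0 the integral F(x) := ∫_0^∞ e^{-ay} f(x + y) dy converges and is positive and finite. Then F is log-convex on (0,∞). -/

import Mathlib

open Real Set MeasureTheory

/-!
For positive `g`, convexity of `log ∘ g` says `g (a • x + b • y) ≤ g x ^ a * g y ^ b`. For
each `y > 0` the kernel `K x y = e^{-ay} f (x + y)` is log-convex in `x`, so integrating this
inequality in `y` and bounding `∫ K x y ^ a * K z y ^ b dy` by Hölder's inequality with
exponents `1/a, 1/b` yields the same inequality for `F`.
-/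

theorem convexOn_log_iff_le_rpow_mul_rpow {E : Type*} [AddCommGroup E] [Module ℝ E]
    {s : Set E} {g : E → ℝ} (hg : ∀ x ∈ s, 0 < g x) :
    ConvexOn ℝ s (fun x => log (g x)) ↔ Convex ℝ s ∧
      ∀ ⦃x⦄, x ∈ s → ∀ ⦃y⦄, y ∈ s → ∀ ⦃a b : ℝ⦄, 0 ≤ a → 0 ≤ b → a + b = 1 →
        g (a • x + b • y) ≤ g x ^ a * g y ^ b := by
  refine and_congr_right fun hs => ?_
  have key : ∀ ⦃x⦄, x ∈ s → ∀ ⦃y⦄, y ∈ s → ∀ ⦃a b : ℝ⦄, 0 ≤ a → 0 ≤ b → a + b = 1 →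
      (log (g (a • x + b • y)) ≤ a • log (g x) + b • log (g y) ↔
        g (a • x + b • y) ≤ g x ^ a * g y ^ b) := by
    intro x hx y hy a b ha hb hab
    have hgx := hg x hx
    have hgy := hg y hy
    rw [smul_eq_mul, smul_eq_mul, ← log_rpow hgx, ← log_rpow hgy,
      ← log_mul (rpow_pos_of_pos hgx a).ne' (rpow_pos_of_pos hgy b).ne',
      log_le_log_iff (hg _ (hs hx hy ha hb hab)) (by positivity)]
  exact ⟨fun h x hx y hy a b ha hb hab => (key hx hy ha hb hab).1 (h hx hy ha hb hab),
    fun h x hx y hy a b ha hb hab => (key hx hy ha hb hab).2 (h hx hy ha hb hab)⟩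

section Holder

variable {α : Type*} [MeasurableSpace α] {μ : Measure α} {f g : α → ℝ} {p q : ℝ}

theorem MeasureTheory.Integrable.rpow_mul_rpow (hf : Integrable f μ) (hg : Integrable g μ)
    (hf0 : 0 ≤ᵐ[μ] f) (hg0 : 0 ≤ᵐ[μ] g) (hp : 0 ≤ p) (hq : 0 ≤ q) (hpq : p + q = 1) :
    Integrable (fun y => f y ^ p * g y ^ q) μ := by
  refine ((hf.const_mul p).add (hg.const_mul q)).mono'
    ((hf.aemeasurable.pow_const p).mul (hg.aemeasurable.pow_const q)).aestronglyMeasurable ?_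
  filter_upwards [hf0, hg0] with y hfy hgy
  rw [Real.norm_of_nonneg (mul_nonneg (rpow_nonneg hfy p) (rpow_nonneg hgy q))]
  exact geom_mean_le_arith_mean2_weighted hp hq hfy hgy hpq

theorem MeasureTheory.integral_rpow_mul_rpow_le (hf : Integrable f μ) (hg : Integrable g μ)
    (hf0 : 0 ≤ᵐ[μ] f) (hg0 : 0 ≤ᵐ[μ] g) (hp : 0 ≤ p) (hq : 0 ≤ q) (hpq : p + q = 1) :
    ∫ y, f y ^ p * g y ^ q ∂μ ≤ (∫ y, f y ∂μ) ^ p * (∫ y, g y ∂μ) ^ q := by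
  have hofReal : ∀ᵐ y ∂μ, ENNReal.ofReal (f y ^ p * g y ^ q) =
      ENNReal.ofReal (f y) ^ p * ENNReal.ofReal (g y) ^ q := by
    filter_upwards [hf0, hg0] with y hfy hgy
    rw [ENNReal.ofReal_mul (rpow_nonneg hfy p), ENNReal.ofReal_rpow_of_nonneg hfy hp,
      ENNReal.ofReal_rpow_of_nonneg hgy hq]
  have hlint : ∫⁻ y, ENNReal.ofReal (f y ^ p * g y ^ q) ∂μ ≤
      ENNReal.ofReal (∫ y, f y ∂μ) ^ p * ENNReal.ofReal (∫ y, g y ∂μ) ^ q := by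
    rw [lintegral_congr_ae hofReal, ofReal_integral_eq_lintegral_ofReal hf hf0,
      ofReal_integral_eq_lintegral_ofReal hg hg0]
    exact ENNReal.lintegral_mul_norm_pow_le hf.aemeasurable.ennreal_ofReal
      hg.aemeasurable.ennreal_ofReal hp hq hpq
  have hF0 := integral_nonneg_of_ae hf0
  have hG0 := integral_nonneg_of_ae hg0
  have hprod0 : 0 ≤ᵐ[μ] fun y => f y ^ p * g y ^ q := by
    filter_upwards [hf0, hg0] with y hfy hgy
    exact mul_nonneg (rpow_nonneg hfy p) (rpow_nonneg hgy q)
  rw [← ENNReal.ofReal_le_ofReal_iff (by positivity),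
    ofReal_integral_eq_lintegral_ofReal (hf.rpow_mul_rpow hg hf0 hg0 hp hq hpq) hprod0,
    ENNReal.ofReal_mul (by positivity), ← ENNReal.ofReal_rpow_of_nonneg hF0 hp,
    ← ENNReal.ofReal_rpow_of_nonneg hG0 hq]
  exact hlint

end Holder

theorem convexOn_log_integral {E α : Type*} [AddCommGroup E] [Module ℝ E] [MeasurableSpace α]
    {μ : Measure α} {s : Set E} {K : E → α → ℝ} (hs : Convex ℝ s)
    (hK_pos : ∀ᵐ y ∂μ, ∀ x ∈ s, 0 < K x y) (hK : ∀ᵐ y ∂μ, ConvexOn ℝ s fun x => log (K x y))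
    (hint : ∀ x ∈ s, Integrable (K x) μ) (hpos : ∀ x ∈ s, 0 < ∫ y, K x y ∂μ) :
    ConvexOn ℝ s fun x => log (∫ y, K x y ∂μ) := by
  rw [convexOn_log_iff_le_rpow_mul_rpow hpos]
  refine ⟨hs, fun x hx z hz a b ha hb hab => ?_⟩
  have hK0 : ∀ w ∈ s, 0 ≤ᵐ[μ] K w := fun w hw => hK_pos.mono fun y hy => (hy w hw).le
  have hK_le : ∀ᵐ y ∂μ, K (a • x + b • z) y ≤ K x y ^ a * K z y ^ b := by
    filter_upwards [hK_pos, hK] with y hy_pos hy_convex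
    exact ((convexOn_log_iff_le_rpow_mul_rpow hy_pos).1 hy_convex).2 hx hz ha hb hab
  calc ∫ y, K (a • x + b • z) y ∂μ ≤ ∫ y, K x y ^ a * K z y ^ b ∂μ :=
        integral_mono_of_nonneg (hK0 _ (hs hx hz ha hb hab))
          ((hint x hx).rpow_mul_rpow (hint z hz) (hK0 x hx) (hK0 z hz) ha hb hab) hK_le
    _ ≤ (∫ y, K x y ∂μ) ^ a * (∫ y, K z y ∂μ) ^ b :=
        integral_rpow_mul_rpow_le (hint x hx) (hint z hz) (hK0 x hx) (hK0 z hz) ha hb hab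

theorem stmt_4_general (f : ℝ → ℝ)
    (hfpos : ∀ x > (0:ℝ), 0 < f x)
    (hflc : ConvexOn ℝ (Set.Ioi 0) (fun x => Real.log (f x)))
    (a : ℝ)
    (hint : ∀ x > (0:ℝ),
      IntegrableOn (fun y => Real.exp (-a * y) * f (x + y)) (Set.Ioi 0))
    (hFpos : ∀ x > (0:ℝ),
      0 < ∫ y in Set.Ioi (0:ℝ), Real.exp (-a * y) * f (x + y)) :
    ConvexOn ℝ (Set.Ioi 0)
      (fun x => Real.log (∫ y in Set.Ioi (0:ℝ), Real.exp (-a * y) * f (x + y))) := by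
  have hy_pos : ∀ᵐ y ∂volume.restrict (Ioi (0:ℝ)), 0 < y := ae_restrict_mem measurableSet_Ioi
  refine convexOn_log_integral (convex_Ioi 0) ?_ ?_ hint hFpos
  · filter_upwards [hy_pos] with y hy x (hx : 0 < x)
    exact mul_pos (exp_pos _) (hfpos _ (add_pos hx hy))
  · filter_upwards [hy_pos] with y hy
    have hshift : ConvexOn ℝ (Ioi 0) fun x => log (f (y + x)) :=
      (hflc.translate_right y).subset (fun x (hx : 0 < x) => add_pos hy hx) (convex_Ioi 0)
    refine (hshift.add_const (-a * y)).congr fun x (hx : 0 < x) => ?_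
    simp only [Pi.add_apply]
    rw [log_mul (exp_pos _).ne' (hfpos _ (add_pos hx hy)).ne', log_exp, add_comm x, add_comm]

/-- If f : (0,∞) → (0,∞) is measurable and log-convex and a > 0, and if for every x > 0
the integral F(x) = ∫_0^∞ e^{-ay} f(x+y) dy converges and is positive and finite,
then F is log-convex on (0,∞). -/
theorem stmt_4 (f : ℝ → ℝ) (hfm : Measurable f)
    (hfpos : ∀ x > (0:ℝ), 0 < f x)
    (hflc : ConvexOn ℝ (Set.Ioi 0) (fun x => Real.log (f x)))
    (a : ℝ) (ha : 0 < a)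
    (hint : ∀ x > (0:ℝ),
      IntegrableOn (fun y => Real.exp (-a * y) * f (x + y)) (Set.Ioi 0))
    (hFpos : ∀ x > (0:ℝ),
      0 < ∫ y in Set.Ioi (0:ℝ), Real.exp (-a * y) * f (x + y)) :
    ConvexOn ℝ (Set.Ioi 0)
      (fun x => Real.log (∫ y in Set.Ioi (0:ℝ), Real.exp (-a * y) * f (x + y))) :=
  stmt_4_general f hfpos hflc a hint hFpos
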